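/- arXiv:0810.3715 — 5 statements merged into one kernel-verified Lean document; each statement's English description precedes it below -/
import Mathlib

section
/- Let N ≥ 1, let K be a real N×N matrix, and for each index i ∈ {1,…,N} let S_i ⊆ {1,…,N} be a set with i ∈ S_i such that K_{ij} = 0 whenever j ∉ S_i. Define Θ_i = { j ≠ i : S_i ∩ S_j ≠ ∅ }. Suppose there exist ψ_1,…,ψ_N > 0 and γ_max ∈ (0,1) such that for every i: ψ_i + √(ψ_i) · ∑_{j∈Θ_i} √(ψ_j) ≤ γ_max, and ∑_{j=1}^N K_{ij}² ≤ ψ_i (the squared Euclidean norm of row i of K is at most ψ_i). Then every eigenvalue of the symmetric positive semidefinite matrix K Kᵀ is at most γ_max; in particular the largest singular value of K satisfies γ(K) ≤ √γ_max < 1. -/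
/-!
Gershgorin's theorem bounds every eigenvalue of the Gram matrix `K * Kᵀ` by a diagonal entry
`∑ l, K k l ^ 2 ≤ ψ k` plus the off-diagonal absolute row sum. By Cauchy–Schwarz the entry
`(K * Kᵀ) k j` is at most `√(ψ k) * √(ψ j)` in absolute value, and it vanishes unless the
supports `S k` and `S j` meet, i.e. unless `j ∈ Θ k`. For the norm, `‖K‖ = ‖Kᵀ‖` and
`‖Kᵀ x‖² = ⟪K Kᵀ x, x⟫`, which a symmetric operator bounds by its largest eigenvalue times `‖x‖²`.
-/

open Finset Matrix
open scoped RealInnerProductSpace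

theorem LinearMap.IsSymmetric.inner_apply_self_le {E : Type*} [NormedAddCommGroup E]
    [InnerProductSpace ℝ E] [FiniteDimensional ℝ E] {T : E →ₗ[ℝ] E} (hT : T.IsSymmetric)
    {γ : ℝ} (h : ∀ μ, Module.End.HasEigenvalue T μ → μ ≤ γ) (x : E) :
    ⟪T x, x⟫ ≤ γ * ‖x‖ ^ 2 := by
  set b := hT.eigenvectorBasis rfl
  have inner_eq : ∀ y, ⟪y, x⟫ = ∑ i, b.repr y i * b.repr x i := fun y => by
    simp only [← b.sum_inner_mul_inner y x, b.repr_apply_apply, real_inner_comm y]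
  calc ⟪T x, x⟫ = ∑ i, hT.eigenvalues rfl i * (b.repr x i * b.repr x i) := by
        simp only [inner_eq, b, hT.eigenvectorBasis_apply_self_apply, mul_assoc,
          RCLike.ofReal_real_eq_id, id_eq]
    _ ≤ ∑ i, γ * (b.repr x i * b.repr x i) :=
        sum_le_sum fun i _ => mul_le_mul_of_nonneg_right
          (h _ (hT.hasEigenvalue_eigenvalues rfl i)) (mul_self_nonneg _)
    _ = γ * ‖x‖ ^ 2 := by rw [← mul_sum, ← inner_eq, real_inner_self_eq_norm_sq]

theorem ContinuousLinearMap.norm_le_sqrt_of_hasEigenvalue_comp_adjoint_le {E F : Type*}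
    [NormedAddCommGroup E] [InnerProductSpace ℝ E] [CompleteSpace E]
    [NormedAddCommGroup F] [InnerProductSpace ℝ F] [FiniteDimensional ℝ F]
    (T : E →L[ℝ] F) {γ : ℝ}
    (h : ∀ μ, Module.End.HasEigenvalue ((T ∘L adjoint T : F →L[ℝ] F) : F →ₗ[ℝ] F) μ → μ ≤ γ) :
    ‖T‖ ≤ √γ := by
  rw [← adjoint.norm_map T]
  refine opNorm_le_bound _ (Real.sqrt_nonneg γ) fun x => ?_
  have hsymm : ((T ∘L adjoint T : F →L[ℝ] F) : F →ₗ[ℝ] F).IsSymmetric :=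
    (isPositive_self_comp_adjoint T).isSymmetric
  have hquad : ‖adjoint T x‖ ^ 2 ≤ γ * ‖x‖ ^ 2 := by
    have := hsymm.inner_apply_self_le h x
    rwa [coe_coe, comp_apply, ← adjoint_inner_right, real_inner_self_eq_norm_sq] at this
  calc ‖adjoint T x‖ = √(‖adjoint T x‖ ^ 2) := (Real.sqrt_sq (norm_nonneg _)).symm
    _ ≤ √(γ * ‖x‖ ^ 2) := Real.sqrt_le_sqrt hquad
    _ = √γ * ‖x‖ := by rw [Real.sqrt_mul' _ (sq_nonneg _), Real.sqrt_sq (norm_nonneg _)]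

namespace Matrix

variable {m n : Type*} [Fintype n]

theorem hasEigenvalue_toEuclideanLin_iff {𝕜 : Type*} [RCLike 𝕜] [DecidableEq n]
    {A : Matrix n n 𝕜} {μ : 𝕜} :
    Module.End.HasEigenvalue (toEuclideanLin A) μ ↔ Module.End.HasEigenvalue (toLin' A) μ := by
  rw [Module.End.hasEigenvalue_iff_mem_spectrum, Module.End.hasEigenvalue_iff_mem_spectrum,
    spectrum_toLpLin, ← AlgEquiv.spectrum_eq toLinAlgEquiv' A]
  rfl

theorem toEuclideanCLM_comp_adjoint [DecidableEq n] (K : Matrix n n ℝ) :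
    ((toEuclideanCLM (𝕜 := ℝ) K ∘L ContinuousLinearMap.adjoint (toEuclideanCLM (𝕜 := ℝ) K) :
      EuclideanSpace ℝ n →L[ℝ] EuclideanSpace ℝ n) : EuclideanSpace ℝ n →ₗ[ℝ] EuclideanSpace ℝ n)
      = toEuclideanLin (K * Kᵀ) := by
  rw [← ContinuousLinearMap.star_eq_adjoint, ← map_star, ← ContinuousLinearMap.mul_def, ← map_mul,
    coe_toEuclideanCLM_eq_toEuclideanLin, star_eq_conjTranspose,
    conjTranspose_eq_transpose_of_trivial]

theorem norm_toEuclideanCLM_le_sqrt [DecidableEq n] {K : Matrix n n ℝ} {γ : ℝ}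
    (h : ∀ μ, Module.End.HasEigenvalue (toLin' (K * Kᵀ)) μ → μ ≤ γ) :
    ‖toEuclideanCLM (𝕜 := ℝ) K‖ ≤ √γ :=
  ContinuousLinearMap.norm_le_sqrt_of_hasEigenvalue_comp_adjoint_le _ fun μ hμ =>
    h μ (hasEigenvalue_toEuclideanLin_iff.1 (toEuclideanCLM_comp_adjoint K ▸ hμ))

theorem eigenvalue_le_of_forall_diag_add_sum_abs_le [DecidableEq n] {A : Matrix n n ℝ} {γ : ℝ}
    (h : ∀ k, A k k + ∑ j ∈ univ.erase k, |A k j| ≤ γ) {μ : ℝ}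
    (hμ : Module.End.HasEigenvalue (toLin' A) μ) : μ ≤ γ := by
  obtain ⟨k, hk⟩ := eigenvalue_mem_ball hμ
  rw [Metric.mem_closedBall, Real.dist_eq] at hk
  simp only [Real.norm_eq_abs] at hk
  linarith [le_abs_self (μ - A k k), h k]

theorem mul_transpose_apply_self (K : Matrix m n ℝ) (i : m) :
    (K * Kᵀ) i i = ∑ l, K i l ^ 2 := by
  simp [mul_apply, sq]

theorem abs_mul_transpose_apply_le (K : Matrix m n ℝ) (i j : m) :
    |(K * Kᵀ) i j| ≤ √(∑ l, K i l ^ 2) * √(∑ l, K j l ^ 2) := by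
  rw [← Real.sqrt_mul (sum_nonneg fun _ _ => sq_nonneg _)]
  exact Real.abs_le_sqrt (by simpa [mul_apply] using sum_mul_sq_le_sq_mul_sq univ (K i) (K j))

theorem mul_transpose_apply_eq_zero_of_disjoint {R : Type*} [NonUnitalNonAssocSemiring R]
    {K : Matrix m n R} {S : m → Finset n} (hsupp : ∀ i l, l ∉ S i → K i l = 0) {i j : m}
    (hij : Disjoint (S i) (S j)) : (K * Kᵀ) i j = 0 := by
  refine sum_eq_zero fun l _ => ?_
  by_cases hl : l ∈ S i
  · simp [hsupp j l (disjoint_left.1 hij hl)]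
  · simp [hsupp i l hl]

theorem sum_abs_mul_transpose_apply_le [Fintype m] [DecidableEq m] [DecidableEq n]
    {K : Matrix m n ℝ} {S : m → Finset n} (hsupp : ∀ i l, l ∉ S i → K i l = 0) {ψ : m → ℝ}
    (hrow : ∀ i, ∑ l, K i l ^ 2 ≤ ψ i) (k : m) :
    ∑ j ∈ univ.erase k, |(K * Kᵀ) k j| ≤
      √(ψ k) * ∑ j ∈ univ.filter (fun j => j ≠ k ∧ (S k ∩ S j).Nonempty), √(ψ j) := by
  have hΘ : univ.filter (fun j => j ≠ k ∧ (S k ∩ S j).Nonempty) =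
      (univ.erase k).filter (fun j => (S k ∩ S j).Nonempty) := by
    ext j; simp
  rw [hΘ, mul_sum, sum_filter]
  refine sum_le_sum fun j _ => ?_
  split_ifs with hkj
  · exact (abs_mul_transpose_apply_le K k j).trans
      (mul_le_mul (Real.sqrt_le_sqrt (hrow k)) (Real.sqrt_le_sqrt (hrow j))
        (Real.sqrt_nonneg _) (Real.sqrt_nonneg _))
  · rw [mul_transpose_apply_eq_zero_of_disjoint hsupp (not_nonempty_iff_eq_empty.1 hkj |>
      disjoint_iff_inter_eq_empty.2), abs_zero]

end Matrix

theorem stmt_2_general (N : ℕ) (K : Matrix (Fin N) (Fin N) ℝ)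
    (S : Fin N → Finset (Fin N))
    (hsupp : ∀ i j, j ∉ S i → K i j = 0)
    (ψ : Fin N → ℝ)
    (γmax : ℝ) (hγ1 : γmax < 1)
    (hconstr : ∀ i, ψ i + Real.sqrt (ψ i) *
      ∑ j ∈ univ.filter (fun j => j ≠ i ∧ (S i ∩ S j).Nonempty), Real.sqrt (ψ j) ≤ γmax)
    (hrow : ∀ i, ∑ j, (K i j) ^ 2 ≤ ψ i) :
    (∀ μ : ℝ, Module.End.HasEigenvalue (Matrix.toLin' (K * Kᵀ)) μ → μ ≤ γmax) ∧
      ‖Matrix.toEuclideanCLM (𝕜 := ℝ) K‖ ≤ Real.sqrt γmax ∧ Real.sqrt γmax < 1 := by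
  have heig : ∀ μ : ℝ, Module.End.HasEigenvalue (toLin' (K * Kᵀ)) μ → μ ≤ γmax :=
    fun μ => eigenvalue_le_of_forall_diag_add_sum_abs_le fun k => by
      rw [mul_transpose_apply_self]
      linarith [hrow k, hconstr k, sum_abs_mul_transpose_apply_le hsupp hrow k]
  exact ⟨heig, norm_toEuclideanCLM_le_sqrt heig,
    (Real.sqrt_lt' one_pos).2 (by rwa [one_pow])⟩

/-- Decentralized sufficient condition for the spectral norm bound: if each row `i` of `K`
is supported on `S i ∋ i`, `Θ i = {j ≠ i : S i ∩ S j ≠ ∅}`, and there are `ψ i > 0` with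
`ψ i + √(ψ i) ∑_{j ∈ Θ i} √(ψ j) ≤ γ_max < 1` and `‖row i of K‖² ≤ ψ i`, then every
eigenvalue of `K Kᵀ` is at most `γ_max` and the largest singular value of `K`
(its ℓ²-operator norm) is at most `√γ_max < 1`. -/
theorem stmt_2 (N : ℕ) (hN : 1 ≤ N) (K : Matrix (Fin N) (Fin N) ℝ)
    (S : Fin N → Finset (Fin N)) (hself : ∀ i, i ∈ S i)
    (hsupp : ∀ i j, j ∉ S i → K i j = 0)
    (ψ : Fin N → ℝ) (hψpos : ∀ i, 0 < ψ i)
    (γmax : ℝ) (hγ0 : 0 < γmax) (hγ1 : γmax < 1)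
    (hconstr : ∀ i, ψ i + Real.sqrt (ψ i) *
      ∑ j ∈ univ.filter (fun j => j ≠ i ∧ (S i ∩ S j).Nonempty), Real.sqrt (ψ j) ≤ γmax)
    (hrow : ∀ i, ∑ j, (K i j) ^ 2 ≤ ψ i) :
    (∀ μ : ℝ, Module.End.HasEigenvalue (Matrix.toLin' (K * Kᵀ)) μ → μ ≤ γmax) ∧
      ‖Matrix.toEuclideanCLM (𝕜 := ℝ) K‖ ≤ Real.sqrt γmax ∧ Real.sqrt γmax < 1 :=
  stmt_2_general N K S hsupp ψ γmax hγ1 hconstr hrow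
end

section
/- The vector ψ^ℓ with entries ψ^ℓ_i = (γ_max/4)(√(|Θ_i|² + 4) − |Θ_i|)² is a feasible solution of the threshold optimization problem: every entry satisfies 0 < ψ^ℓ_i ≤ γ_max, and S_i(ψ^ℓ) ≤ 0 for every i ∈ {1,…,N}. -/
open Finset

/-- The vector `ψℓ` with entries `ψℓ i = (γ_max/4) (√(|Θ i|² + 4) - |Θ i|)²` is a feasible
point of the threshold optimization problem: `0 < ψℓ i ≤ γ_max` and
`S i (ψℓ) = ψℓ i + √(ψℓ i) ∑_{j ∈ Θ i} √(ψℓ j) - γ_max ≤ 0` for every `i`. -/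
theorem stmt_3 (N : ℕ) (hN : 1 ≤ N) (γmax : ℝ) (hγ0 : 0 < γmax) (hγ1 : γmax < 1)
    (Θ : Fin N → Finset (Fin N)) (hirr : ∀ i, i ∉ Θ i)
    (ψℓ : Fin N → ℝ)
    (hψℓ : ∀ i, ψℓ i = γmax / 4 *
      (Real.sqrt (((Θ i).card : ℝ) ^ 2 + 4) - ((Θ i).card : ℝ)) ^ 2) :
    ∀ i, (0 < ψℓ i ∧ ψℓ i ≤ γmax) ∧
      ψℓ i + Real.sqrt (ψℓ i) * ∑ j ∈ Θ i, Real.sqrt (ψℓ j) - γmax ≤ 0 := by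
  have hγ : Real.sqrt γmax ^ 2 = γmax := Real.sq_sqrt hγ0.le
  have hγs : 0 ≤ Real.sqrt γmax := Real.sqrt_nonneg _
  have key : ∀ j : Fin N, 0 < ψℓ j ∧
      Real.sqrt (ψℓ j) = Real.sqrt γmax / 2 *
        (Real.sqrt (((Θ j).card : ℝ) ^ 2 + 4) - ((Θ j).card : ℝ)) ∧
      Real.sqrt (ψℓ j) ≤ Real.sqrt γmax := by
    intro j
    set n : ℝ := ((Θ j).card : ℝ) with hn
    have hn0 : 0 ≤ n := Nat.cast_nonneg _
    have ht2 : Real.sqrt (n ^ 2 + 4) ^ 2 = n ^ 2 + 4 := Real.sq_sqrt (by positivity)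
    have ht0 : 0 ≤ Real.sqrt (n ^ 2 + 4) := Real.sqrt_nonneg _
    have htn : n < Real.sqrt (n ^ 2 + 4) := by nlinarith
    have htn2 : Real.sqrt (n ^ 2 + 4) ≤ n + 2 := by nlinarith
    have hsq : ψℓ j = (Real.sqrt γmax / 2 * (Real.sqrt (n ^ 2 + 4) - n)) ^ 2 := by
      rw [hψℓ j, ← hn]; nlinarith
    have hs0 : 0 ≤ Real.sqrt γmax / 2 * (Real.sqrt (n ^ 2 + 4) - n) := by nlinarith
    have hsqrt : Real.sqrt (ψℓ j) = Real.sqrt γmax / 2 * (Real.sqrt (n ^ 2 + 4) - n) := by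
      rw [hsq, Real.sqrt_sq hs0]
    refine ⟨?_, hsqrt, ?_⟩
    · rw [hsq]
      have hγp : 0 < Real.sqrt γmax := Real.sqrt_pos.mpr hγ0
      exact pow_pos (by nlinarith) 2
    · rw [hsqrt]; nlinarith
  intro i
  obtain ⟨hpos, hsqrt, hle⟩ := key i
  set n : ℝ := ((Θ i).card : ℝ) with hn
  have hn0 : 0 ≤ n := Nat.cast_nonneg _
  have ht2 : Real.sqrt (n ^ 2 + 4) ^ 2 = n ^ 2 + 4 := Real.sq_sqrt (by positivity)
  have ht0 : 0 ≤ Real.sqrt (n ^ 2 + 4) := Real.sqrt_nonneg _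
  have htn : n < Real.sqrt (n ^ 2 + 4) := by nlinarith
  have htn2 : Real.sqrt (n ^ 2 + 4) ≤ n + 2 := by nlinarith
  have hsum : ∑ j ∈ Θ i, Real.sqrt (ψℓ j) ≤ n * Real.sqrt γmax := by
    calc ∑ j ∈ Θ i, Real.sqrt (ψℓ j) ≤ ∑ j ∈ Θ i, Real.sqrt γmax :=
          Finset.sum_le_sum fun j _ => (key j).2.2
      _ = n * Real.sqrt γmax := by rw [Finset.sum_const, nsmul_eq_mul]
  have hs0 : 0 ≤ Real.sqrt (ψℓ i) := Real.sqrt_nonneg _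
  constructor
  · refine ⟨hpos, ?_⟩
    rw [hψℓ i, ← hn]; nlinarith
  · have h1 : ψℓ i + Real.sqrt (ψℓ i) * ∑ j ∈ Θ i, Real.sqrt (ψℓ j) ≤
        ψℓ i + Real.sqrt (ψℓ i) * (n * Real.sqrt γmax) := by
      have := mul_le_mul_of_nonneg_left hsum hs0
      linarith
    have h2 : ψℓ i + Real.sqrt (ψℓ i) * (n * Real.sqrt γmax) = γmax := by
      rw [hsqrt, hψℓ i, ← hn]; nlinarith
    linarith
end

section
/- Let ψ ∈ ℝ^N have all entries positive and assume the index sets are symmetric (j ∈ Θ_i if and only if i ∈ Θ_j). Define the N×N real matrix J(ψ) with entries J(ψ)_{ii} = 1 + (1/(2√ψ_i)) ∑_{j∈Θ_i} √ψ_j, J(ψ)_{ij} = √ψ_i/(2√ψ_j) if j ∈ Θ_i, and J(ψ)_{ij} = 0 if j ∉ Θ_i ∪ {i}. Then every complex eigenvalue z of J(ψ) satisfies Re(z) ≥ 1; in particular J(ψ) is nonsingular. -/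
/-!
Put `s i = √(ψ i)` and write an eigenvector as `v = diag(s) w`. Then `J v = z v` becomes
`(1 + M) w = z w`, where `M` is real symmetric with `M i i = ∑_{k ∈ Θ i} s k / (2 s i)` and
`M i j = 1/2` for `j ∈ Θ i`. Symmetrising over the ordered pairs `j ∈ Θ i` (this is where
`Θ` being symmetric enters) gives
`w* M w = (1/4) ∑ᵢ ∑_{j ∈ Θ i} ‖s j • w i + s i • w j‖² / (s i s j) ≥ 0`,
so `z ‖w‖² = ‖w‖² + w* M w` forces `Re z ≥ 1`; in particular `0` is not an eigenvalue.
-/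

open Finset Matrix ComplexConjugate

namespace Finset

variable {ι M : Type*} [Fintype ι] {Θ : ι → Finset ι}

theorem sum_sum_comm_of_symm [AddCommMonoid M] (hsym : ∀ i j, j ∈ Θ i ↔ i ∈ Θ j)
    (f : ι → ι → M) : ∑ i, ∑ j ∈ Θ i, f i j = ∑ i, ∑ j ∈ Θ i, f j i :=
  sum_comm' fun i j => by simp [hsym i j]

theorem sum_sum_nonneg_of_symm [AddCommGroup M] [LinearOrder M] [IsOrderedAddMonoid M]
    (hsym : ∀ i j, j ∈ Θ i ↔ i ∈ Θ j) {f : ι → ι → M} (hf : ∀ i, ∀ j ∈ Θ i, 0 ≤ f i j + f j i) :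
    0 ≤ ∑ i, ∑ j ∈ Θ i, f i j := by
  have h2 : 0 ≤ ∑ i, ∑ j ∈ Θ i, f i j + ∑ i, ∑ j ∈ Θ i, f i j := by
    nth_rw 2 [sum_sum_comm_of_symm hsym]
    simp only [← sum_add_distrib]
    exact sum_nonneg fun i _ => sum_nonneg (hf i)
  by_contra! h
  exact (add_neg h h).not_ge h2

end Finset

theorem Complex.div_mul_normSq_add_re_conj_mul_nonneg {a b : ℝ} (ha : 0 < a) (hb : 0 < b) (x y : ℂ) :
    0 ≤ b / a * normSq x + (conj x * y).re + (a / b * normSq y + (conj y * x).re) := by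
  have h : a * b * (b / a * normSq x + (conj x * y).re + (a / b * normSq y + (conj y * x).re))
      = normSq (b * x + a * y) := by
    rw [normSq_add]
    simp only [mul_re, conj_re, conj_im, neg_mul, sub_neg_eq_add, normSq_ofReal,
      map_mul, conj_ofReal, ofReal_re, ofReal_im, zero_mul, sub_zero, mul_neg, neg_zero, mul_im,
      add_zero]
    field_simp
    ring
  exact (mul_nonneg_iff_of_pos_left (by positivity)).1 (h ▸ normSq_nonneg _)

section

variable {ι : Type*} [Fintype ι] {Θ : ι → Finset ι} {s : ι → ℝ}

theorem one_le_re_of_forall_add_half_sum_eq_mul (hsym : ∀ i j, j ∈ Θ i ↔ i ∈ Θ j)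
    (hs : ∀ i, 0 < s i) {z : ℂ} {w : ι → ℂ} (hw : w ≠ 0)
    (hrow : ∀ i, w i + (∑ j ∈ Θ i, ((s j / s i : ℝ) * w i + w j)) / 2 = z * w i) :
    1 ≤ z.re := by
  set f : ι → ι → ℝ := fun i j => s j / s i * Complex.normSq (w i) + (conj (w i) * w j).re
  have hre : ∀ i, Complex.normSq (w i) + (∑ j ∈ Θ i, f i j) / 2 = z.re * Complex.normSq (w i) :=
    fun i => by
    have hc : (Complex.normSq (w i) : ℂ)
        + (∑ j ∈ Θ i, (((s j / s i * Complex.normSq (w i) : ℝ) : ℂ) + conj (w i) * w j)) / 2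
        = z * Complex.normSq (w i) := by
      have h := congrArg (conj (w i) * ·) (hrow i)
      simp only [mul_add, mul_sum, mul_div_assoc'] at h
      push_cast at h ⊢
      simp only [Complex.normSq_eq_conj_mul_self]
      rw [mul_left_comm, ← h]
      congr 2
      exact sum_congr rfl fun j _ => by ring
    simpa [f, Complex.re_sum] using congrArg Complex.re hc
  have hW : 0 < ∑ i, Complex.normSq (w i) := by
    obtain ⟨i, hi⟩ := Function.ne_iff.1 hw
    exact sum_pos' (fun j _ => Complex.normSq_nonneg _) ⟨i, mem_univ i, Complex.normSq_pos.2 hi⟩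
  have hQ : 0 ≤ ∑ i, ∑ j ∈ Θ i, f i j := sum_sum_nonneg_of_symm hsym fun i j _ =>
    Complex.div_mul_normSq_add_re_conj_mul_nonneg (hs i) (hs j) (w i) (w j)
  have hsum := sum_congr rfl fun i (_ : i ∈ univ) => hre i
  rw [sum_add_distrib, ← sum_div, ← mul_sum] at hsum
  nlinarith

variable [DecidableEq ι] {J : Matrix ι ι ℝ}

theorem mulVec_map_ofReal_mul_eq (hirr : ∀ i, i ∉ Θ i) (hs : ∀ i, s i ≠ 0)
    (hJ : ∀ i j, J i j =
      if i = j then 1 + 1 / (2 * s i) * ∑ k ∈ Θ i, s k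
      else if j ∈ Θ i then s i / (2 * s j) else 0)
    (w : ι → ℂ) (i : ι) :
    (J.map (fun x => (x : ℂ)) *ᵥ fun j => (s j : ℂ) * w j) i
      = s i * (w i + (∑ j ∈ Θ i, ((s j / s i : ℝ) * w i + w j)) / 2) := by
  have hzero : ∀ j ∉ insert i (Θ i), (J i j : ℂ) * (s j * w j) = 0 := fun j hj => by
    rw [mem_insert, not_or] at hj
    simp [hJ, Ne.symm hj.1, hj.2]
  simp only [Matrix.mulVec, dotProduct, Matrix.map_apply]
  rw [← sum_subset (subset_univ _) fun j _ => hzero j, sum_insert (hirr i)]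
  have hoff : ∀ j ∈ Θ i, (J i j : ℂ) * (s j * w j) = s i * w j / 2 := fun j hj => by
    have hij : i ≠ j := fun h => hirr i (h ▸ hj)
    rw [hJ, if_neg hij, if_pos hj]
    push_cast
    field_simp [hs j]
  rw [sum_congr rfl hoff, hJ, if_pos rfl]
  push_cast
  simp only [sum_add_distrib, ← sum_div, ← sum_mul, ← mul_sum]
  field_simp [hs i]
  ring

theorem one_le_re_of_mulVec_map_ofReal_eq_smul (hirr : ∀ i, i ∉ Θ i)
    (hsym : ∀ i j, j ∈ Θ i ↔ i ∈ Θ j) (hs : ∀ i, 0 < s i)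
    (hJ : ∀ i j, J i j =
      if i = j then 1 + 1 / (2 * s i) * ∑ k ∈ Θ i, s k
      else if j ∈ Θ i then s i / (2 * s j) else 0)
    {z : ℂ} {v : ι → ℂ} (hv : v ≠ 0) (hz : J.map (fun x => (x : ℂ)) *ᵥ v = z • v) :
    1 ≤ z.re := by
  have hs0 : ∀ i, (s i : ℂ) ≠ 0 := fun i => Complex.ofReal_ne_zero.2 (hs i).ne'
  set w : ι → ℂ := fun i => v i / s i
  have hvw : v = fun i => (s i : ℂ) * w i := funext fun i => (mul_div_cancel₀ _ (hs0 i)).symm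
  have hw : w ≠ 0 := by
    obtain ⟨i, hi⟩ := Function.ne_iff.1 hv
    exact Function.ne_iff.2 ⟨i, div_ne_zero hi (hs0 i)⟩
  refine one_le_re_of_forall_add_half_sum_eq_mul hsym hs hw fun i => ?_
  have hzi := congrFun hz i
  rw [hvw, mulVec_map_ofReal_mul_eq hirr (fun i => (hs i).ne') hJ, Pi.smul_apply, smul_eq_mul,
    mul_left_comm] at hzi
  exact mul_left_cancel₀ (hs0 i) hzi

end

theorem stmt_5_general (N : ℕ)
    (Θ : Fin N → Finset (Fin N)) (hirr : ∀ i, i ∉ Θ i)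
    (hsym : ∀ i j, j ∈ Θ i ↔ i ∈ Θ j)
    (ψ : Fin N → ℝ) (hψpos : ∀ i, 0 < ψ i)
    (J : Matrix (Fin N) (Fin N) ℝ)
    (hJ : ∀ i j, J i j =
      if i = j then 1 + 1 / (2 * Real.sqrt (ψ i)) * ∑ k ∈ Θ i, Real.sqrt (ψ k)
      else if j ∈ Θ i then Real.sqrt (ψ i) / (2 * Real.sqrt (ψ j)) else 0) :
    (∀ z : ℂ, Module.End.HasEigenvalue (Matrix.toLin' (J.map (fun x => (x : ℂ)))) z →
      1 ≤ z.re) ∧ J.det ≠ 0 := by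
  have key {z : ℂ} {v : Fin N → ℂ} (hv : v ≠ 0) (hz : J.map (fun x => (x : ℂ)) *ᵥ v = z • v) :
      1 ≤ z.re :=
    one_le_re_of_mulVec_map_ofReal_eq_smul hirr hsym (fun i => Real.sqrt_pos.2 (hψpos i)) hJ hv hz
  refine ⟨fun z hz => ?_, fun hdet => ?_⟩
  · obtain ⟨v, hv⟩ := hz.exists_hasEigenvector
    exact key hv.2 (by simpa using hv.apply_eq_smul)
  · have hdetC : (J.map (fun x => (x : ℂ))).det = 0 := by
      rw [show J.map (fun x => (x : ℂ)) = (algebraMap ℝ ℂ).mapMatrix J from rfl,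
        ← RingHom.map_det, hdet, map_zero]
    obtain ⟨v, hv, hv0⟩ := exists_mulVec_eq_zero_iff.2 hdetC
    exact absurd (key (z := 0) hv (by simpa using hv0)) (by norm_num)

/-- The Jacobian `J(ψ)` of the constraint map, with
`J(ψ) i i = 1 + (1/(2√(ψ i))) ∑_{j ∈ Θ i} √(ψ j)`, `J(ψ) i j = √(ψ i)/(2√(ψ j))` for
`j ∈ Θ i` and `0` otherwise, has all its complex eigenvalues with real part at least `1`;
in particular it is nonsingular. -/
theorem stmt_5 (N : ℕ) (hN : 1 ≤ N)
    (Θ : Fin N → Finset (Fin N)) (hirr : ∀ i, i ∉ Θ i)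
    (hsym : ∀ i j, j ∈ Θ i ↔ i ∈ Θ j)
    (ψ : Fin N → ℝ) (hψpos : ∀ i, 0 < ψ i)
    (J : Matrix (Fin N) (Fin N) ℝ)
    (hJ : ∀ i j, J i j =
      if i = j then 1 + 1 / (2 * Real.sqrt (ψ i)) * ∑ k ∈ Θ i, Real.sqrt (ψ k)
      else if j ∈ Θ i then Real.sqrt (ψ i) / (2 * Real.sqrt (ψ j)) else 0) :
    (∀ z : ℂ, Module.End.HasEigenvalue (Matrix.toLin' (J.map (fun x => (x : ℂ)))) z →
      1 ≤ z.re) ∧ J.det ≠ 0 :=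
  stmt_5_general N Θ hirr hsym ψ hψpos J hJ
end

section
/- Let ψ* ∈ ℝ^N have all entries positive and satisfy ψ*_i + √(ψ*_i) · ∑_{j∈Θ_i} √(ψ*_j) = γ_max for every i ∈ {1,…,N}. Then ψ*_i ≤ γ_max for every i, and ψ*_i ≥ ψ^ℓ_i for every i, where ψ^ℓ_i = (γ_max/4)(√(|Θ_i|² + 4) − |Θ_i|)². -/
open Finset

/-- Any positive solution `ψ*` of the equality system
`ψ* i + √(ψ* i) ∑_{j ∈ Θ i} √(ψ* j) = γ_max` satisfies `ψ* i ≤ γ_max` and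
`ψ* i ≥ ψℓ i = (γ_max/4) (√(|Θ i|² + 4) - |Θ i|)²` for every `i`. -/
theorem stmt_7 (N : ℕ) (hN : 1 ≤ N) (γmax : ℝ) (hγ0 : 0 < γmax) (hγ1 : γmax < 1)
    (Θ : Fin N → Finset (Fin N)) (hirr : ∀ i, i ∉ Θ i)
    (ψs : Fin N → ℝ) (hψpos : ∀ i, 0 < ψs i)
    (heq : ∀ i, ψs i + Real.sqrt (ψs i) * ∑ j ∈ Θ i, Real.sqrt (ψs j) = γmax) :
    ∀ i, ψs i ≤ γmax ∧
      γmax / 4 * (Real.sqrt (((Θ i).card : ℝ) ^ 2 + 4) - ((Θ i).card : ℝ)) ^ 2 ≤ ψs i := by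
  have hub : ∀ i, ψs i ≤ γmax := by
    intro i
    have h := heq i
    have hnn : 0 ≤ Real.sqrt (ψs i) * ∑ j ∈ Θ i, Real.sqrt (ψs j) :=
      mul_nonneg (Real.sqrt_nonneg _) (Finset.sum_nonneg fun j _ => Real.sqrt_nonneg _)
    linarith
  intro i
  refine ⟨hub i, ?_⟩
  set k : ℝ := ((Θ i).card : ℝ) with hk
  have hk0 : 0 ≤ k := Nat.cast_nonneg _
  set x := Real.sqrt (ψs i) with hx
  have hx0 : 0 < x := Real.sqrt_pos.mpr (hψpos i)
  have hxsq : x ^ 2 = ψs i := Real.sq_sqrt (hψpos i).le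
  set s := Real.sqrt γmax with hs
  have hs0 : 0 < s := Real.sqrt_pos.mpr hγ0
  have hssq : s ^ 2 = γmax := Real.sq_sqrt hγ0.le
  set c := Real.sqrt (k ^ 2 + 4) with hc
  have hcsq : c ^ 2 = k ^ 2 + 4 := Real.sq_sqrt (by positivity)
  have hc0 : 0 ≤ c := Real.sqrt_nonneg _
  have hck : k ≤ c := by nlinarith
  -- each sqrt ψ j ≤ s
  have hsum : ∑ j ∈ Θ i, Real.sqrt (ψs j) ≤ k * s := by
    calc ∑ j ∈ Θ i, Real.sqrt (ψs j) ≤ ∑ j ∈ Θ i, s :=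
          Finset.sum_le_sum fun j _ => Real.sqrt_le_sqrt (hub j)
      _ = k * s := by rw [Finset.sum_const, nsmul_eq_mul]
  have hkey : γmax ≤ x ^ 2 + x * (k * s) := by
    have h := heq i
    nlinarith [mul_le_mul_of_nonneg_left hsum hx0.le]
  -- factor: (x - s(c-k)/2)(x + s(c+k)/2) = x² + ksx - s² ≥ 0
  have hfac : 0 ≤ (x - s * (c - k) / 2) * (x + s * (c + k) / 2) := by
    nlinarith
  have hpos : 0 < x + s * (c + k) / 2 := by nlinarith
  have hxge : s * (c - k) / 2 ≤ x := by nlinarith [mul_pos hpos hpos]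
  have hge0 : 0 ≤ s * (c - k) / 2 := by nlinarith
  have : (s * (c - k) / 2) ^ 2 ≤ x ^ 2 := by nlinarith
  calc γmax / 4 * (c - k) ^ 2 = (s * (c - k) / 2) ^ 2 := by rw [← hssq]; ring
    _ ≤ x ^ 2 := this
    _ = ψs i := hxsq
end

section
/- Let N ≥ 1, let P be a real symmetric positive semidefinite N×N matrix, let φ ∈ {0,1}^N have exactly n entries equal to 1 with 1 ≤ n ≤ N, and suppose P_{ii} ≤ σ²/n for every index i with φ_i = 1, where σ > 0. Let 1 ≤ θ ≤ N be an integer, let 0 < γ_max < 1, let ψ ≥ (γ_max/4)(√(θ² + 4) − θ)², and let λ be a real number with 0 ≤ λ ≤ σ²/√(n ψ). Then every eigenvalue of the matrix (P + λ I) ∘ (φ φᵀ) is at most σ² (1 + 2N/((√5 − 1) √γ_max)). -/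
/-!
Masking by `φ` turns the quadratic form of `(P + λI) ∘ φφᵀ` at `v` into that of `P + λI` at
`y = φ ∘ v`. On the support of `φ` every entry of `P` is bounded by `σ²/n` (the `2 × 2` principal
minors of `P` are nonnegative), so Cauchy–Schwarz over the `n` support indices gives
`yᵀPy ≤ σ² ‖y‖² ≤ σ² ‖v‖²`, and every eigenvalue is at most `σ² + λ`. Finally
`θ (√(θ² + 4) - θ) ≥ √5 - 1` for `θ ≥ 1`, which bounds `√(nψ)` from below by
`(√5 - 1) √γ_max / (2N)` and hence `λ` from above.
-/

open Finset Matrix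

namespace Matrix

variable {ι : Type*}

theorem PosSemidef.apply_sq_le_mul {P : Matrix ι ι ℝ} (hP : P.PosSemidef) (i j : ι) :
    P i j ^ 2 ≤ P i i * P j j := by
  have hdet := (hP.submatrix ![i, j]).det_nonneg
  have hsymm : P j i = P i j := hP.isHermitian.apply i j
  rw [det_fin_two] at hdet
  simp only [submatrix_apply, cons_val_zero, cons_val_one, hsymm] at hdet
  linarith [sq (P i j)]

theorem PosSemidef.abs_apply_le {P : Matrix ι ι ℝ} (hP : P.PosSemidef) {c : ℝ} {i j : ι}
    (hi : P i i ≤ c) (hj : P j j ≤ c) : |P i j| ≤ c := by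
  have hi0 : 0 ≤ P i i := hP.diag_nonneg
  have hj0 : 0 ≤ P j j := hP.diag_nonneg
  refine abs_le_of_sq_le_sq ?_ (hi0.trans hi)
  calc P i j ^ 2 ≤ P i i * P j j := hP.apply_sq_le_mul i j
    _ ≤ c ^ 2 := by rw [sq]; exact mul_le_mul hi hj hj0 (hi0.trans hi)

variable [Fintype ι]

theorem dotProduct_mulVec_le_of_abs_apply_le {A : Matrix ι ι ℝ} {S : Finset ι} {c : ℝ}
    (hc : 0 ≤ c) (hA : ∀ i ∈ S, ∀ j ∈ S, |A i j| ≤ c) {y : ι → ℝ} (hy : ∀ i ∉ S, y i = 0) :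
    y ⬝ᵥ (A *ᵥ y) ≤ c * #S * (y ⬝ᵥ y) := by
  have restrict : ∀ f : ι → ℝ, (∀ i ∉ S, f i = 0) → ∑ i, f i = ∑ i ∈ S, f i := fun f hf =>
    (sum_subset (subset_univ S) fun i _ hi => hf i hi).symm
  have hquad : y ⬝ᵥ (A *ᵥ y) = ∑ i ∈ S, ∑ j ∈ S, y i * A i j * y j := by
    simp only [dotProduct, mulVec, mul_sum, ← mul_assoc]
    rw [restrict _ fun i hi => by simp [hy i hi]]
    exact sum_congr rfl fun i _ => restrict _ fun j hj => by simp [hy j hj]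
  have hnorm : y ⬝ᵥ y = ∑ i ∈ S, y i ^ 2 := by
    rw [dotProduct, restrict _ fun i hi => by simp [hy i hi]]
    simp only [sq]
  calc y ⬝ᵥ (A *ᵥ y) ≤ ∑ i ∈ S, ∑ j ∈ S, |y i| * c * |y j| := by
        rw [hquad]
        refine sum_le_sum fun i hi => sum_le_sum fun j hj => ?_
        calc y i * A i j * y j ≤ |y i * A i j * y j| := le_abs_self _
          _ = |y i| * |A i j| * |y j| := by rw [abs_mul, abs_mul]
          _ ≤ |y i| * c * |y j| := by gcongr; exact hA i hi j hj
    _ = c * (∑ i ∈ S, |y i|) ^ 2 := by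
        rw [sq, sum_mul_sum, mul_sum]
        exact sum_congr rfl fun i _ => by rw [mul_sum]; exact sum_congr rfl fun j _ => by ring
    _ ≤ c * (#S * ∑ i ∈ S, |y i| ^ 2) := by gcongr; exact sq_sum_le_card_mul_sum_sq
    _ = c * #S * (y ⬝ᵥ y) := by simp only [sq_abs, hnorm, mul_assoc]

theorem dotProduct_hadamard_vecMulVec_mulVec {R : Type*} [CommSemiring R] (A : Matrix ι ι R)
    (φ v : ι → R) : v ⬝ᵥ ((A ⊙ vecMulVec φ φ) *ᵥ v) = (φ * v) ⬝ᵥ (A *ᵥ (φ * v)) := by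
  simp only [dotProduct, mulVec, hadamard_apply, vecMulVec_apply, Pi.mul_apply, mul_sum]
  exact sum_congr rfl fun i _ => sum_congr rfl fun j _ => by ring

theorem eigenvalue_le_of_dotProduct_mulVec_le [DecidableEq ι] {M : Matrix ι ι ℝ} {c : ℝ}
    (hM : ∀ v, v ⬝ᵥ (M *ᵥ v) ≤ c * (v ⬝ᵥ v)) {μ : ℝ}
    (hμ : Module.End.HasEigenvalue (toLin' M) μ) : μ ≤ c := by
  obtain ⟨v, hv⟩ := hμ.exists_hasEigenvector
  have heig : M *ᵥ v = μ • v := by simpa using hv.apply_eq_smul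
  have hpos : 0 < v ⬝ᵥ v := (dotProduct_self_star_pos_iff.mpr hv.2 :)
  refine le_of_mul_le_mul_right ?_ hpos
  simpa [heig] using hM v

theorem dotProduct_mulVec_add_smul_one_hadamard_le [DecidableEq ι] {P : Matrix ι ι ℝ}
    (hP : P.PosSemidef) {φ : ι → ℝ} (hφ : ∀ i, φ i = 0 ∨ φ i = 1) {c lam : ℝ} (hc : 0 ≤ c)
    (hdiag : ∀ i, φ i = 1 → P i i ≤ c) (hlam : 0 ≤ lam) (v : ι → ℝ) :
    v ⬝ᵥ (((P + lam • 1) ⊙ vecMulVec φ φ) *ᵥ v) ≤ (c * #{i | φ i = 1} + lam) * (v ⬝ᵥ v) := by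
  rw [dotProduct_hadamard_vecMulVec_mulVec, add_mulVec, smul_mulVec, one_mulVec, dotProduct_add,
    dotProduct_smul, smul_eq_mul]
  have hmask : (φ * v) ⬝ᵥ (φ * v) ≤ v ⬝ᵥ v := by
    refine sum_le_sum fun i _ => ?_
    rcases hφ i with h | h <;> simp [h, mul_self_nonneg]
  have hP' : (φ * v) ⬝ᵥ (P *ᵥ (φ * v)) ≤ c * #{i | φ i = 1} * ((φ * v) ⬝ᵥ (φ * v)) := by
    refine dotProduct_mulVec_le_of_abs_apply_le hc (fun i hi j hj =>
      hP.abs_apply_le (hdiag i (mem_filter.mp hi).2) (hdiag j (mem_filter.mp hj).2)) fun i hi => ?_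
    rcases hφ i with h | h
    · simp [h]
    · exact absurd (mem_filter.mpr ⟨mem_univ i, h⟩) hi
  have hcS : 0 ≤ c * #{i | φ i = 1} := by positivity
  nlinarith [mul_le_mul_of_nonneg_left hmask hcS, mul_le_mul_of_nonneg_left hmask hlam]

end Matrix

theorem sqrt_five_sub_one_le_mul_sqrt_sq_add_four_sub {x : ℝ} (hx : 1 ≤ x) :
    √5 - 1 ≤ x * (√(x ^ 2 + 4) - x) := by
  have h5 : √5 ^ 2 = 5 := Real.sq_sqrt (by norm_num)
  have hx4 : √(x ^ 2 + 4) ^ 2 = x ^ 2 + 4 := Real.sq_sqrt (by positivity)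
  have h5lo : 2 ≤ √5 := Real.le_sqrt_of_sq_le (by norm_num)
  have h5hi : √5 ≤ 3 := Real.sqrt_le_iff.mpr ⟨by norm_num, by norm_num⟩
  -- after squaring, the claim reduces to `(6 - 2√5) (x² - 1) ≥ 0`
  have hsq : (x ^ 2 + √5 - 1) ^ 2 ≤ (x * √(x ^ 2 + 4)) ^ 2 := by
    nlinarith [mul_nonneg (sub_nonneg.mpr h5hi) (by nlinarith : (0 : ℝ) ≤ x ^ 2 - 1)]
  have := abs_le_of_sq_le_sq hsq (by positivity)
  linarith [le_abs_self (x ^ 2 + √5 - 1)]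

theorem sqrt_five_sub_one_mul_sqrt_le {γ ψ θ N n : ℝ} (hγ : 0 < γ) (hθ : 1 ≤ θ) (hθN : θ ≤ N)
    (hn : 1 ≤ n) (hψ : γ / 4 * (√(θ ^ 2 + 4) - θ) ^ 2 ≤ ψ) :
    (√5 - 1) * √γ ≤ 2 * N * √(n * ψ) := by
  have hgap := sqrt_five_sub_one_le_mul_sqrt_sq_add_four_sub hθ
  have hgap0 : 0 ≤ √(θ ^ 2 + 4) - θ := sub_nonneg.mpr (Real.le_sqrt_of_sq_le (by linarith))
  have hψ0 : 0 ≤ ψ := le_trans (by positivity) hψ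
  have hsqrtψ : √γ / 2 * (√(θ ^ 2 + 4) - θ) ≤ √ψ := by
    refine Real.le_sqrt_of_sq_le ?_
    rwa [mul_pow, div_pow, Real.sq_sqrt hγ.le, show (2 : ℝ) ^ 2 = 4 by norm_num]
  calc (√5 - 1) * √γ ≤ θ * (√(θ ^ 2 + 4) - θ) * √γ := by gcongr
    _ ≤ N * (√(θ ^ 2 + 4) - θ) * √γ := by gcongr
    _ = 2 * N * (√γ / 2 * (√(θ ^ 2 + 4) - θ)) := by ring
    _ ≤ 2 * N * √ψ := by gcongr; linarith
    _ ≤ 2 * N * √(n * ψ) :=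
      mul_le_mul_of_nonneg_left (Real.sqrt_le_sqrt (le_mul_of_one_le_left hψ0 hn)) (by linarith)

theorem stmt_12_general (N : ℕ) (P : Matrix (Fin N) (Fin N) ℝ) (hP : P.PosSemidef)
    (φ : Fin N → ℝ) (hφ : ∀ i, φ i = 0 ∨ φ i = 1)
    (n : ℕ) (hn1 : 1 ≤ n)
    (hcard : (univ.filter fun i => φ i = 1).card = n)
    (σ : ℝ) (hdiag : ∀ i, φ i = 1 → P i i ≤ σ ^ 2 / n)
    (θ : ℕ) (hθ1 : 1 ≤ θ) (hθN : θ ≤ N)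
    (γmax : ℝ) (hγ0 : 0 < γmax)
    (ψ : ℝ) (hψ : γmax / 4 * (Real.sqrt ((θ : ℝ) ^ 2 + 4) - (θ : ℝ)) ^ 2 ≤ ψ)
    (lam : ℝ) (hlam0 : 0 ≤ lam) (hlam1 : lam ≤ σ ^ 2 / Real.sqrt (n * ψ)) :
    ∀ μ : ℝ,
      Module.End.HasEigenvalue
          (Matrix.toLin' ((P + lam • (1 : Matrix (Fin N) (Fin N) ℝ)).hadamard
            (vecMulVec φ φ))) μ →
        μ ≤ σ ^ 2 * (1 + 2 * N / ((Real.sqrt 5 - 1) * Real.sqrt γmax)) := by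
  intro μ hμ
  have hμ_le : μ ≤ σ ^ 2 + lam := by
    refine eigenvalue_le_of_dotProduct_mulVec_le (fun v => ?_) hμ
    have hn : (n : ℝ) ≠ 0 := by positivity
    simpa [hcard, div_mul_cancel₀ _ hn] using
      dotProduct_mulVec_add_smul_one_hadamard_le hP hφ (by positivity) hdiag hlam0 v
  have hthreshold : (√5 - 1) * √γmax ≤ 2 * N * √(n * ψ) :=
    sqrt_five_sub_one_mul_sqrt_le hγ0 (by exact_mod_cast hθ1) (by exact_mod_cast hθN)
      (by exact_mod_cast hn1) hψ
  have hden : 0 < (√5 - 1) * √γmax :=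
    mul_pos (by linarith [Real.lt_sqrt_of_sq_lt (by norm_num : (1 : ℝ) ^ 2 < 5)])
      (Real.sqrt_pos.mpr hγ0)
  have hlam : lam ≤ σ ^ 2 * (2 * N / ((√5 - 1) * √γmax)) := by
    refine hlam1.trans ?_
    have hroot : 0 < √(n * ψ) := pos_of_mul_pos_right (hden.trans_le hthreshold) (by positivity)
    rw [div_eq_mul_one_div]
    exact mul_le_mul_of_nonneg_left ((div_le_div_iff₀ hroot hden).mpr (by linarith)) (sq_nonneg σ)
  linarith

/-- Bound on the largest eigenvalue of `(P + λI) ∘ (φ φᵀ)`: if `P` is symmetric positive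
semidefinite with `P i i ≤ σ²/n` on the support of the `0/1` vector `φ` (which has `n`
ones, `1 ≤ n ≤ N`), `1 ≤ θ ≤ N`, `0 < γ_max < 1`,
`ψ ≥ (γ_max/4)(√(θ² + 4) - θ)²` and `0 ≤ λ ≤ σ²/√(n ψ)`, then every eigenvalue of
`(P + λI) ∘ (φ φᵀ)` is at most `σ² (1 + 2N/((√5 - 1)√γ_max))`. -/
theorem stmt_12 (N : ℕ) (hN : 1 ≤ N) (P : Matrix (Fin N) (Fin N) ℝ) (hP : P.PosSemidef)
    (φ : Fin N → ℝ) (hφ : ∀ i, φ i = 0 ∨ φ i = 1)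
    (n : ℕ) (hn1 : 1 ≤ n) (hnN : n ≤ N)
    (hcard : (univ.filter fun i => φ i = 1).card = n)
    (σ : ℝ) (hσ : 0 < σ) (hdiag : ∀ i, φ i = 1 → P i i ≤ σ ^ 2 / n)
    (θ : ℕ) (hθ1 : 1 ≤ θ) (hθN : θ ≤ N)
    (γmax : ℝ) (hγ0 : 0 < γmax) (hγ1 : γmax < 1)
    (ψ : ℝ) (hψ : γmax / 4 * (Real.sqrt ((θ : ℝ) ^ 2 + 4) - (θ : ℝ)) ^ 2 ≤ ψ)
    (lam : ℝ) (hlam0 : 0 ≤ lam) (hlam1 : lam ≤ σ ^ 2 / Real.sqrt (n * ψ)) :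
    ∀ μ : ℝ,
      Module.End.HasEigenvalue
          (Matrix.toLin' ((P + lam • (1 : Matrix (Fin N) (Fin N) ℝ)).hadamard
            (vecMulVec φ φ))) μ →
        μ ≤ σ ^ 2 * (1 + 2 * N / ((Real.sqrt 5 - 1) * Real.sqrt γmax)) :=
  stmt_12_general N P hP φ hφ n hn1 hcard σ hdiag θ hθ1 hθN γmax hγ0 ψ hψ lam hlam0 hlam1
end
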